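/- Let u > 0 and define μ₁(a') = [(1/π)√(a'−u) + (u/(2π))(a'−u)^{−1/2}]·1_{a'>u} − (1/π)√(a')·1_{a'>0}. Then for every a > u, the principal value integral vanishes: lim_{ε→0⁺} ∫_{|a'−a|>ε} μ₁(a')/(a − a') da' = 0. -/

import Mathlib

open Real Filter Set MeasureTheory

/-- `μ₁(a') = [(1/π)√(a'−u) + (u/(2π))(a'−u)^{−1/2}]·1_{a'>u} − (1/π)√(a')·1_{a'>0}`. -/
noncomputable def mu1 (u : ℝ) (x : ℝ) : ℝ :=
  (if u < x then 1 / π * Real.sqrt (x - u) + u / (2 * π) * (x - u) ^ (-(1 : ℝ) / 2) else 0)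
    - (if 0 < x then 1 / π * Real.sqrt x else 0)

open Topology

/-!
With `c = √(a - b)` and `s = √(t - b)`, the function `(log (c + s) - log (c - s)) / c` is a
primitive of `t ↦ 1 / (√(t - b) (a - t))` on both sides of `a` (`Real.log` only sees `|c - s|`),
and it vanishes for `t ≤ b` since `Real.sqrt` does. Combining these primitives for `b = u` and
`b = 0` gives a primitive `H` of `μ₁(x) / (a - x)` on `ℝ \ {a}` that vanishes at `0` and at
`+∞`. On each of `(0, u)`, `(u, a)` and `(a, ∞)` the integrand has constant sign, which yields
integrability, so the truncated integral equals `H (a - ε) - H (a + ε)`. This tends to `0`: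
since `|c - s| (c + s) = |a - t|`, the logarithmic singularities at `a ± ε` cancel.
-/

noncomputable def invSqrtPrimitive (a b t : ℝ) : ℝ :=
  (log (√(a - b) + √(t - b)) - log (√(a - b) - √(t - b))) / √(a - b)

section
variable {a b t : ℝ}

lemma invSqrtPrimitive_of_le (ht : t ≤ b) : invSqrtPrimitive a b t = 0 := by
  simp [invSqrtPrimitive, sqrt_eq_zero'.2 (sub_nonpos.2 ht)]

lemma sqrt_sub_sub_sqrt_sub_ne_zero (hb : b < a) (hta : t ≠ a) : √(a - b) - √(t - b) ≠ 0 := by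
  rcases le_or_gt t b with htb | htb
  · rw [sqrt_eq_zero'.2 (sub_nonpos.2 htb), sub_zero]
    exact (sqrt_pos.2 (sub_pos.2 hb)).ne'
  · rw [sub_ne_zero, Ne, sqrt_inj (sub_pos.2 hb).le (sub_pos.2 htb).le]
    exact fun h => hta (by linarith)

lemma continuousOn_invSqrtPrimitive (hb : b < a) :
    ContinuousOn (invSqrtPrimitive a b) {a}ᶜ := by
  have hc : 0 < √(a - b) := sqrt_pos.2 (sub_pos.2 hb)
  have hs : Continuous fun t => √(t - b) := by fun_prop
  refine (ContinuousOn.sub ?_ ?_).div_const _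
  · exact (continuous_const.add hs).continuousOn.log fun t _ =>
      (add_pos_of_pos_of_nonneg hc (sqrt_nonneg _)).ne'
  · exact (continuous_const.sub hs).continuousOn.log fun t ht => sqrt_sub_sub_sqrt_sub_ne_zero hb ht

lemma hasDerivAt_invSqrtPrimitive (hb : b < a) (htb : t ≠ b) (hta : t ≠ a) :
    HasDerivAt (invSqrtPrimitive a b) ((√(t - b))⁻¹ / (a - t)) t := by
  rcases htb.lt_or_gt with htb | htb
  · rw [sqrt_eq_zero'.2 (sub_nonpos.2 htb.le), inv_zero, zero_div]
    refine (hasDerivAt_const t 0).congr_of_eventuallyEq ?_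
    filter_upwards [Iio_mem_nhds htb] with x hx using invSqrtPrimitive_of_le (le_of_lt hx)
  have hc : 0 < √(a - b) := sqrt_pos.2 (sub_pos.2 hb)
  have hs : 0 < √(t - b) := sqrt_pos.2 (sub_pos.2 htb)
  have hcs := sqrt_sub_sub_sqrt_sub_ne_zero hb hta
  have hsq : HasDerivAt (fun x => √(x - b)) (1 / (2 * √(t - b))) t :=
    ((hasDerivAt_id t).sub_const b).sqrt (sub_pos.2 htb).ne'
  have := (((hsq.const_add (√(a - b))).log (add_pos_of_pos_of_nonneg hc hs.le).ne').sub
    ((hsq.const_sub (√(a - b))).log hcs)).div_const (√(a - b))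
  refine this.congr_deriv ?_
  have hc2 := sq_sqrt (sub_pos.2 hb).le
  have hs2 := sq_sqrt (sub_pos.2 htb).le
  have hat : a - t = (√(a - b) - √(t - b)) * (√(a - b) + √(t - b)) := by nlinarith
  rw [hat]
  field_simp
  ring

lemma tendsto_invSqrtPrimitive_atTop :
    Tendsto (invSqrtPrimitive a b) atTop (𝓝 0) := by
  have hs : Tendsto (fun t => √(t - b) - √(a - b)) atTop atTop :=
    tendsto_atTop_add_const_right _ _ <|
      tendsto_sqrt_atTop.comp (tendsto_atTop_add_const_right _ _ tendsto_id)
  have hlim : Tendsto (fun t => log (1 + 2 * √(a - b) / (√(t - b) - √(a - b))) / √(a - b))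
      atTop (𝓝 (log (1 + 0) / √(a - b))) :=
    ((tendsto_const_nhds.add (hs.const_div_atTop _)).log (by norm_num)).div_const _
  rw [add_zero, log_one, zero_div] at hlim
  refine hlim.congr' ?_
  filter_upwards [hs.eventually_gt_atTop 0] with t ht
  have hc : 0 ≤ √(a - b) := sqrt_nonneg _
  rw [invSqrtPrimitive, ← log_neg_eq_log (√(a - b) - _), ← log_div (by linarith) (by linarith),
    neg_sub]
  congr 2
  field_simp [ht.ne']
  ring

lemma invSqrtPrimitive_eq_of_le (hb : b < a) (htb : b ≤ t) (hta : t ≠ a) :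
    invSqrtPrimitive a b t = (2 * log (√(a - b) + √(t - b)) - log (a - t)) / √(a - b) := by
  have hc : 0 < √(a - b) := sqrt_pos.2 (sub_pos.2 hb)
  have hat : a - t = (√(a - b) - √(t - b)) * (√(a - b) + √(t - b)) := by
    nlinarith [sq_sqrt (sub_pos.2 hb).le, sq_sqrt (sub_nonneg.2 htb)]
  rw [invSqrtPrimitive, hat, log_mul (sqrt_sub_sub_sqrt_sub_ne_zero hb hta)
    (add_pos_of_pos_of_nonneg hc (sqrt_nonneg _)).ne']
  ring

lemma tendsto_invSqrtPrimitive_sub (hb : b < a) :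
    Tendsto (fun ε => invSqrtPrimitive a b (a - ε) - invSqrtPrimitive a b (a + ε))
      (𝓝[>] 0) (𝓝 0) := by
  have hc : 0 < √(a - b) := sqrt_pos.2 (sub_pos.2 hb)
  have hlog : ∀ s : ℝ, Tendsto (fun ε => log (√(a - b) + √(a + s * ε - b))) (𝓝 0)
      (𝓝 (log (√(a - b) + √(a - b)))) := fun s => by
    have h : ContinuousAt (fun ε => log (√(a - b) + √(a + s * ε - b))) 0 :=
      ContinuousAt.log (by fun_prop) (by simpa using (add_pos hc hc).ne')
    simpa using h.tendsto
  have hlim := ((hlog (-1)).sub (hlog 1)).const_mul (2 / √(a - b))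
  rw [sub_self, mul_zero] at hlim
  refine (hlim.mono_left nhdsWithin_le_nhds).congr' ?_
  filter_upwards [Ioo_mem_nhdsGT (sub_pos.2 hb)] with ε hε
  rw [invSqrtPrimitive_eq_of_le hb (by linarith [hε.2]) (by linarith [hε.1]),
    invSqrtPrimitive_eq_of_le hb (by linarith [hε.1]) (by linarith [hε.1]),
    show a - (a + ε) = -ε by ring, log_neg_eq_log, show a - (a - ε) = ε by ring]
  ring_nf
end

lemma ContinuousAt.tendsto_sub_sub_add {f : ℝ → ℝ} {a : ℝ} (hf : ContinuousAt f a) :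
    Tendsto (fun ε => f (a - ε) - f (a + ε)) (𝓝[>] 0) (𝓝 0) := by
  have h : Tendsto (fun ε => f (a - ε) - f (a + ε)) (𝓝 0) (𝓝 (f (a - 0) - f (a + 0))) :=
    ((hf.comp_of_eq (by fun_prop) (sub_zero a)).sub
      (hf.comp_of_eq (by fun_prop) (add_zero a))).tendsto
  simpa using h.mono_left nhdsWithin_le_nhds

-- `√(t - b) / (a - t) = (a - b) / (√(t - b) (a - t)) - 1 / √(t - b)`
noncomputable def sqrtPrimitive (a b t : ℝ) : ℝ :=
  -2 * √(t - b) + (a - b) * invSqrtPrimitive a b t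

section
variable {a b t : ℝ}

lemma hasDerivAt_sqrtPrimitive (hb : b < a) (htb : t ≠ b) (hta : t ≠ a) :
    HasDerivAt (sqrtPrimitive a b) (√(t - b) / (a - t)) t := by
  have hsq : HasDerivAt (fun x => √(x - b)) (1 / (2 * √(t - b))) t :=
    ((hasDerivAt_id t).sub_const b).sqrt (sub_ne_zero.2 htb)
  refine ((hsq.const_mul (-2)).add ((hasDerivAt_invSqrtPrimitive hb htb hta).const_mul
    (a - b))).congr_deriv ?_
  have hat : a - t ≠ 0 := sub_ne_zero.2 hta.symm
  calc -2 * (1 / (2 * √(t - b))) + (a - b) * ((√(t - b))⁻¹ / (a - t))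
      = (t - b) / √(t - b) / (a - t) := by field_simp; ring
    _ = √(t - b) / (a - t) := by rw [div_sqrt]

lemma continuousOn_sqrtPrimitive (hb : b < a) : ContinuousOn (sqrtPrimitive a b) {a}ᶜ :=
  ((continuous_const.mul (by fun_prop)).continuousOn).add
    (continuousOn_const.mul (continuousOn_invSqrtPrimitive hb))

lemma tendsto_sqrtPrimitive_sub (hb : b < a) :
    Tendsto (fun ε => sqrtPrimitive a b (a - ε) - sqrtPrimitive a b (a + ε)) (𝓝[>] 0) (𝓝 0) := by
  have h := (ContinuousAt.tendsto_sub_sub_add (f := fun t => -2 * √(t - b)) (a := a)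
    (by fun_prop)).add ((tendsto_invSqrtPrimitive_sub hb).const_mul (a - b))
  rw [mul_zero, add_zero] at h
  refine h.congr fun ε => ?_
  simp only [sqrtPrimitive]
  ring
end

section
variable {u x : ℝ}

-- For `x ≤ u` the junk value `(√(x - u))⁻¹ = 0` makes the first two terms vanish.
lemma mu1_eq_sqrt (u x : ℝ) : mu1 u x = (√(x - u) + u / 2 * (√(x - u))⁻¹ - √x) / π := by
  have hrpow (h : u < x) : (x - u) ^ (-(1 : ℝ) / 2) = (√(x - u))⁻¹ := by
    rw [sqrt_eq_rpow, ← rpow_neg (sub_pos.2 h).le]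
    norm_num
  unfold mu1
  split_ifs with hux h0x h0x
  · rw [hrpow hux]; ring
  · simp [sqrt_eq_zero'.2 (not_lt.1 h0x), hrpow hux]; ring
  · simp [sqrt_eq_zero'.2 (sub_nonpos.2 (not_lt.1 hux))]; ring
  · simp [sqrt_eq_zero'.2 (sub_nonpos.2 (not_lt.1 hux)), sqrt_eq_zero'.2 (not_lt.1 h0x)]

lemma mu1_of_nonpos (hu : 0 ≤ u) (hx : x ≤ 0) : mu1 u x = 0 := by
  simp [mu1, not_lt.2 (hx.trans hu), not_lt.2 hx]

lemma mu1_nonpos_of_le (hx : x ≤ u) : mu1 u x ≤ 0 := by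
  rw [mu1_eq_sqrt, sqrt_eq_zero'.2 (sub_nonpos.2 hx)]
  simp only [inv_zero, mul_zero, add_zero, zero_sub, neg_div]
  exact neg_nonpos.2 (by positivity)

lemma mu1_nonneg_of_lt (hu : 0 ≤ u) (hx : u < x) : 0 ≤ mu1 u x := by
  have hs : 0 < √(x - u) := sqrt_pos.2 (sub_pos.2 hx)
  have hs2 := sq_sqrt (sub_pos.2 hx).le
  have hbound : √x ≤ √(x - u) + u / 2 * (√(x - u))⁻¹ := by
    rw [sqrt_le_iff]
    refine ⟨by positivity, ?_⟩
    have : (√(x - u) + u / 2 * (√(x - u))⁻¹) ^ 2 = x + (u / 2 * (√(x - u))⁻¹) ^ 2 := by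
      field_simp
      linear_combination 4 * (√(x - u)) ^ 2 * hs2
    nlinarith
  rw [mu1_eq_sqrt]
  exact div_nonneg (by linarith) pi_pos.le
end

noncomputable def mu1Primitive (u a x : ℝ) : ℝ :=
  (sqrtPrimitive a u x + u / 2 * invSqrtPrimitive a u x - sqrtPrimitive a 0 x) / π

lemma tendsto_sqrt_sub_sqrt_sub_atTop (u : ℝ) :
    Tendsto (fun x => √x - √(x - u)) atTop (𝓝 0) := by
  have hden : Tendsto (fun x => √x + √(x - u)) atTop atTop :=
    tendsto_sqrt_atTop.atTop_add_atTop
      (tendsto_sqrt_atTop.comp (tendsto_atTop_add_const_right _ _ tendsto_id))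
  refine (hden.const_div_atTop u).congr' ?_
  filter_upwards [hden.eventually_gt_atTop 0, eventually_ge_atTop u, eventually_ge_atTop 0]
    with x hpos hxu hx0
  rw [div_eq_iff hpos.ne']
  nlinarith [sq_sqrt hx0, sq_sqrt (sub_nonneg.2 hxu)]

section
variable {u a x : ℝ}

lemma hasDerivAt_mu1Primitive (ha : 0 < a) (hua : u < a) (hx0 : x ≠ 0) (hxu : x ≠ u)
    (hxa : x ≠ a) : HasDerivAt (mu1Primitive u a) (mu1 u x / (a - x)) x := by
  have h := (((hasDerivAt_sqrtPrimitive hua hxu hxa).add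
    ((hasDerivAt_invSqrtPrimitive hua hxu hxa).const_mul (u / 2))).sub
    (hasDerivAt_sqrtPrimitive ha hx0 hxa)).div_const π
  refine h.congr_deriv ?_
  rw [mu1_eq_sqrt, sub_zero]
  ring

lemma continuousOn_mu1Primitive (ha : 0 < a) (hua : u < a) :
    ContinuousOn (mu1Primitive u a) {a}ᶜ :=
  (((continuousOn_sqrtPrimitive hua).add
    (continuousOn_const.mul (continuousOn_invSqrtPrimitive hua))).sub
    (continuousOn_sqrtPrimitive ha)).div_const π

lemma mu1Primitive_zero (hu : 0 ≤ u) : mu1Primitive u a 0 = 0 := by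
  simp [mu1Primitive, sqrtPrimitive, invSqrtPrimitive_of_le hu, invSqrtPrimitive_of_le le_rfl,
    sqrt_eq_zero'.2 (neg_nonpos.2 hu)]

lemma tendsto_mu1Primitive_atTop : Tendsto (mu1Primitive u a) atTop (𝓝 0) := by
  have h := ((((tendsto_sqrt_sub_sqrt_sub_atTop u).const_mul 2).add
    ((tendsto_invSqrtPrimitive_atTop (a := a) (b := u)).const_mul (a - u / 2))).sub
    ((tendsto_invSqrtPrimitive_atTop (a := a) (b := 0)).const_mul a)).div_const π
  simp only [mul_zero, add_zero, sub_zero, zero_div] at h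
  refine h.congr fun x => ?_
  simp only [mu1Primitive, sqrtPrimitive, sub_zero]
  ring

lemma tendsto_mu1Primitive_sub (ha : 0 < a) (hua : u < a) :
    Tendsto (fun ε => mu1Primitive u a (a - ε) - mu1Primitive u a (a + ε)) (𝓝[>] 0) (𝓝 0) := by
  have h := (((tendsto_sqrtPrimitive_sub hua).add
    ((tendsto_invSqrtPrimitive_sub hua).const_mul (u / 2))).sub
    (tendsto_sqrtPrimitive_sub ha)).div_const π
  simp only [mul_zero, add_zero, sub_zero, zero_div] at h
  refine h.congr fun ε => ?_
  simp only [mu1Primitive]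
  ring
end

lemma integrableOn_deriv_of_nonpos {f f' : ℝ → ℝ} {p q : ℝ} (hcont : ContinuousOn f (Icc p q))
    (hderiv : ∀ x ∈ Ioo p q, HasDerivAt f (f' x) x) (hneg : ∀ x ∈ Ioo p q, f' x ≤ 0) :
    IntegrableOn f' (Ioc p q) := by
  simpa using (intervalIntegral.integrableOn_deriv_of_nonneg hcont.neg
    (fun x hx => (hderiv x hx).neg) fun x hx => neg_nonneg.2 (hneg x hx)).neg

section
variable {u a y : ℝ}

lemma integrableOn_Ioc_mu1_div (hu : 0 < u) (hua : u < a) (hy : u ≤ y) (hya : y < a) :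
    IntegrableOn (fun x => mu1 u x / (a - x)) (Ioc 0 y) := by
  have ha : 0 < a := hu.trans hua
  have hcont : ContinuousOn (mu1Primitive u a) (Icc 0 y) :=
    (continuousOn_mu1Primitive ha hua).mono fun x hx => (lt_of_le_of_lt hx.2 hya).ne
  have hderiv : ∀ x ∈ Ioo 0 y, x ≠ u → HasDerivAt (mu1Primitive u a) (mu1 u x / (a - x)) x :=
    fun x hx hxu => hasDerivAt_mu1Primitive ha hua hx.1.ne' hxu (hx.2.trans hya).ne
  rw [← Ioc_union_Ioc_eq_Ioc hu.le hy]
  refine IntegrableOn.union ?_ ?_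
  · refine integrableOn_deriv_of_nonpos (hcont.mono (Icc_subset_Icc le_rfl hy))
      (fun x hx => hderiv x ⟨hx.1, hx.2.trans_le hy⟩ hx.2.ne) fun x hx => ?_
    exact div_nonpos_of_nonpos_of_nonneg (mu1_nonpos_of_le hx.2.le) (by linarith [hx.2])
  · refine intervalIntegral.integrableOn_deriv_of_nonneg (hcont.mono (Icc_subset_Icc hu.le le_rfl))
      (fun x hx => hderiv x ⟨hu.trans hx.1, hx.2⟩ hx.1.ne') fun x hx => ?_
    exact div_nonneg (mu1_nonneg_of_lt hu.le hx.1) (by linarith [hx.2])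

lemma integrableOn_Iio_mu1_div (hu : 0 < u) (hua : u < a) (hy : u ≤ y) (hya : y < a) :
    IntegrableOn (fun x => mu1 u x / (a - x)) (Iio y) :=
  (integrableOn_Ioc_mu1_div hu hua hy hya).of_forall_sdiff_eq_zero measurableSet_Iio
    fun x hx => by rw [mu1_of_nonpos hu.le (not_lt.1 fun h => hx.2 ⟨h, hx.1.le⟩), zero_div]

lemma integral_Iio_mu1_div (hu : 0 < u) (hua : u < a) (hy : u ≤ y) (hya : y < a) :
    ∫ x in Iio y, mu1 u x / (a - x) = mu1Primitive u a y := by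
  have ha : 0 < a := hu.trans hua
  have hy0 : 0 ≤ y := hu.le.trans hy
  rw [setIntegral_eq_of_subset_of_forall_sdiff_eq_zero measurableSet_Iio Ioo_subset_Iio_self
    fun x hx => by rw [mu1_of_nonpos hu.le (not_lt.1 fun h => hx.2 ⟨h, hx.1⟩), zero_div],
    ← integral_Ioc_eq_integral_Ioo, ← intervalIntegral.integral_of_le hy0,
    integral_eq_of_hasDerivAt_off_countable_of_le _ _ hy0 (countable_singleton u)
      ((continuousOn_mu1Primitive ha hua).mono fun x hx => (lt_of_le_of_lt hx.2 hya).ne)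
      (fun x hx => hasDerivAt_mu1Primitive ha hua hx.1.1.ne' hx.2 (hx.1.2.trans hya).ne)
      ((intervalIntegrable_iff_integrableOn_Ioc_of_le hy0).2
        (integrableOn_Ioc_mu1_div hu hua hy hya)),
    mu1Primitive_zero hu.le, sub_zero]

lemma mu1_div_nonpos_of_lt (hu : 0 ≤ u) (hua : u < a) (hy : a < y) : mu1 u y / (a - y) ≤ 0 :=
  div_nonpos_of_nonneg_of_nonpos (mu1_nonneg_of_lt hu (hua.trans hy)) (by linarith)

lemma hasDerivAt_mu1Primitive_of_lt (hu : 0 < u) (hua : u < a) (hy : a < y) :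
    HasDerivAt (mu1Primitive u a) (mu1 u y / (a - y)) y :=
  hasDerivAt_mu1Primitive (hu.trans hua) hua (by linarith) (by linarith) hy.ne'

lemma integrableOn_Ioi_mu1_div (hu : 0 < u) (hua : u < a) (hy : a < y) :
    IntegrableOn (fun x => mu1 u x / (a - x)) (Ioi y) :=
  integrableOn_Ioi_deriv_of_nonpos' (fun _ hx => hasDerivAt_mu1Primitive_of_lt hu hua
    (hy.trans_le hx)) (fun _ hx => mu1_div_nonpos_of_lt hu.le hua (hy.trans hx))
    tendsto_mu1Primitive_atTop

lemma integral_Ioi_mu1_div (hu : 0 < u) (hua : u < a) (hy : a < y) :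
    ∫ x in Ioi y, mu1 u x / (a - x) = -mu1Primitive u a y := by
  rw [integral_Ioi_of_hasDerivAt_of_nonpos' (fun _ hx => hasDerivAt_mu1Primitive_of_lt hu hua
    (hy.trans_le hx)) (fun _ hx => mu1_div_nonpos_of_lt hu.le hua (hy.trans hx))
    tendsto_mu1Primitive_atTop, zero_sub]

lemma integral_abs_sub_gt_mu1_div {ε : ℝ} (hu : 0 < u) (hε : 0 < ε) (hεa : ε < a - u) :
    ∫ x in {x | ε < |x - a|}, mu1 u x / (a - x)
      = mu1Primitive u a (a - ε) - mu1Primitive u a (a + ε) := by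
  have hua : u < a := by linarith
  have hset : {x | ε < |x - a|} = Iio (a - ε) ∪ Ioi (a + ε) := by
    ext x
    simp only [mem_ofPred_eq, mem_union, mem_Iio, mem_Ioi, lt_abs]
    constructor <;> rintro (h | h) <;> [right; left; right; left] <;> linarith
  rw [hset, setIntegral_union (disjoint_left.2 fun _ h1 h2 => by simp_all; linarith)
    measurableSet_Ioi (integrableOn_Iio_mu1_div hu hua (by linarith) (by linarith))
    (integrableOn_Ioi_mu1_div hu hua (by linarith)),
    integral_Iio_mu1_div hu hua (by linarith) (by linarith),
    integral_Ioi_mu1_div hu hua (by linarith)]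
  ring
end

theorem mu1_pv_integral_vanishes (u : ℝ) (hu : 0 < u) (a : ℝ) (ha : u < a) :
    Tendsto (fun ε : ℝ => ∫ x in {x : ℝ | ε < |x - a|}, mu1 u x / (a - x))
      (nhdsWithin 0 (Set.Ioi 0)) (nhds 0) := by
  refine (tendsto_mu1Primitive_sub (hu.trans ha) ha).congr' ?_
  filter_upwards [Ioo_mem_nhdsGT (sub_pos.2 ha)] with ε hε
  exact (integral_abs_sub_gt_mu1_div hu hε.1 hε.2).symm
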